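/- arXiv:2303.05450 — 4 statements merged into one kernel-verified Lean document; each statement's English description precedes it below -/
import Mathlib

section
/- Let b : [0,∞) → ℝ be continuously differentiable with linear growth (there exist M, m > 0 with b(t) ≤ M + m·t for all t ≥ 0), and let f : [0,∞) → ℝ be continuous, integrable, and strictly positive on (0,∞). Then for every fixed t ≥ 0, ε > 0 and n ∈ ℕ, lim_{c→∞} [∫_t^∞ e^{-c²s/2 + c·b(s)} sⁿ f(s) ds] / [∫_t^{t+ε} e^{-c²s/2 + c·b(s)} sⁿ f(s) ds] = 1. -/
/-! Split `∫_t^∞ = ∫_t^{t+ε} + ∫_{t+ε}^∞`. Since `sⁿ ≤ n! eˢ` and `b(s) ≤ M + m s`, the tail is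
at most a constant times `exp(c M + (m c + 1 - c²/2)(t + ε))`. On `[t + ε/4, t + ε/2]` the minima
`B` of `b` and `K > 0` of `sⁿ f(s)` bound the window from below by a constant times
`exp(-c²(t + ε/2)/2 + c B)`. The quotient of the two bounds is the exponential of a quadratic in
`c` with leading coefficient `-ε/4`, so tail / window → 0. -/

open MeasureTheory Real Filter Set
open scoped Nat

/-- The integrand of `I^f_J(n)(c)`. -/
noncomputable def weightedIntegrand (b f : ℝ → ℝ) (n : ℕ) (c s : ℝ) : ℝ :=
  exp (-c ^ 2 * s / 2 + c * b s) * s ^ n * f s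

lemma tendsto_quadratic_atBot {a : ℝ} (ha : a < 0) (L C : ℝ) :
    Tendsto (fun c : ℝ => a * c ^ 2 + L * c + C) atTop atBot := by
  have hlin : Tendsto (fun c : ℝ => a * c + L) atTop atBot :=
    tendsto_atBot_add_const_right _ L (tendsto_id.const_mul_atTop_of_neg ha)
  exact (tendsto_atBot_add_const_right _ C (tendsto_id.atTop_mul_atBot₀ hlin)).congr
    fun c => by simp only [id]; ring

lemma eventually_mul_add_one_le_sq_div_two (m : ℝ) :
    ∀ᶠ c in atTop, 0 ≤ c ∧ m * c + 1 ≤ c ^ 2 / 2 :=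
  (eventually_ge_atTop 0).and <| ((tendsto_quadratic_atBot (by norm_num : (-1 / 2 : ℝ) < 0)
    m 1).eventually_le_atBot 0).mono fun c hc => by linarith

lemma tendsto_add_div_self_of_le_exp_of_exp_le {α : Type*} {l : Filter α} {W T p q : α → ℝ}
    {C₁ C₂ : ℝ} (hC₂ : 0 < C₂) (hT : ∀ᶠ x in l, 0 ≤ T x) (hTp : ∀ᶠ x in l, T x ≤ C₁ * exp (p x))
    (hqW : ∀ᶠ x in l, C₂ * exp (q x) ≤ W x) (hpq : Tendsto (fun x => p x - q x) l atBot) :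
    Tendsto (fun x => (W x + T x) / W x) l (nhds 1) := by
  have hW : ∀ᶠ x in l, 0 < W x := hqW.mono fun x hx => (by positivity : 0 < C₂ * _).trans_le hx
  have hbound : Tendsto (fun x => C₁ / C₂ * exp (p x - q x)) l (nhds 0) := by
    simpa using (tendsto_exp_atBot.comp hpq).const_mul (C₁ / C₂)
  have hTW : Tendsto (fun x => T x / W x) l (nhds 0) := by
    refine tendsto_of_tendsto_of_tendsto_of_le_of_le' tendsto_const_nhds hbound ?_ ?_
    · filter_upwards [hT, hW] with x hTx hWx
      exact div_nonneg hTx hWx.le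
    · filter_upwards [hT, hTp, hqW] with x hTx hTpx hWx
      calc T x / W x ≤ C₁ * exp (p x) / (C₂ * exp (q x)) :=
            div_le_div₀ (hTx.trans hTpx) hTpx (by positivity) hWx
        _ = C₁ / C₂ * exp (p x - q x) := by rw [mul_div_mul_comm, exp_sub]
  have hsum : Tendsto (fun x => 1 + T x / W x) l (nhds 1) := by
    simpa using (tendsto_const_nhds (x := (1 : ℝ))).add hTW
  refine hsum.congr' ?_
  filter_upwards [hW] with x hx
  rw [add_div, div_self hx.ne']

lemma setIntegral_Ici_eq_Icc_add_Ioi {g : ℝ → ℝ} {a b : ℝ} (hab : a ≤ b)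
    (hg₁ : IntegrableOn g (Icc a b)) (hg₂ : IntegrableOn g (Ioi b)) :
    ∫ s in Ici a, g s = (∫ s in Icc a b, g s) + ∫ s in Ioi b, g s := by
  rw [← Icc_union_Ioi_eq_Ici hab, setIntegral_union
    ((Iic_disjoint_Ioi le_rfl).mono_left Icc_subset_Iic_self) measurableSet_Ioi hg₁ hg₂]

section WeightedIntegrand

variable {b f : ℝ → ℝ} {n : ℕ}

lemma continuousOn_weightedIntegrand {S : Set ℝ} (hb : ContinuousOn b S) (hf : ContinuousOn f S)
    (c : ℝ) : ContinuousOn (weightedIntegrand b f n c) S := by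
  unfold weightedIntegrand
  fun_prop

lemma weightedIntegrand_nonneg {c s : ℝ} (hs : 0 ≤ s) (hf : 0 ≤ f s) :
    0 ≤ weightedIntegrand b f n c s := by
  unfold weightedIntegrand
  positivity

lemma exp_mul_pow_le {M m c s : ℝ} (hbs : b s ≤ M + m * s) (hc : 0 ≤ c) (hs : 0 ≤ s) :
    exp (-c ^ 2 * s / 2 + c * b s) * s ^ n ≤ n ! * exp (c * M + (m * c + 1 - c ^ 2 / 2) * s) := by
  have hpow : s ^ n ≤ n ! * exp s := by
    rw [← div_le_iff₀' (by positivity)]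
    exact pow_div_factorial_le_exp s hs n
  calc exp (-c ^ 2 * s / 2 + c * b s) * s ^ n
      ≤ exp (-c ^ 2 * s / 2 + c * (M + m * s)) * (n ! * exp s) := by gcongr
    _ = n ! * exp (c * M + (m * c + 1 - c ^ 2 / 2) * s) := by
      rw [mul_left_comm, ← exp_add]
      ring_nf

lemma weightedIntegrand_le {M m c T s : ℝ} (hbs : b s ≤ M + m * s) (hc : 0 ≤ c)
    (hcq : m * c + 1 ≤ c ^ 2 / 2) (hT : 0 ≤ T) (hTs : T ≤ s) (hf : 0 ≤ f s) :
    weightedIntegrand b f n c s ≤ n ! * exp (c * M + (m * c + 1 - c ^ 2 / 2) * T) * f s := by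
  have hcoeff : (m * c + 1 - c ^ 2 / 2) * s ≤ (m * c + 1 - c ^ 2 / 2) * T :=
    mul_le_mul_of_nonpos_left hTs (by linarith)
  calc weightedIntegrand b f n c s
      ≤ n ! * exp (c * M + (m * c + 1 - c ^ 2 / 2) * s) * f s :=
        mul_le_mul_of_nonneg_right (exp_mul_pow_le hbs hc (hT.trans hTs)) hf
    _ ≤ n ! * exp (c * M + (m * c + 1 - c ^ 2 / 2) * T) * f s := by gcongr

lemma integrableOn_weightedIntegrand_Ioi {M m c T : ℝ} (hT : 0 ≤ T)
    (hgrowth : ∀ s > T, b s ≤ M + m * s) (hb : ContinuousOn b (Ioi T))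
    (hfc : ContinuousOn f (Ioi T)) (hfint : IntegrableOn f (Ioi T)) (hf : ∀ s > T, 0 ≤ f s)
    (hc : 0 ≤ c) (hcq : m * c + 1 ≤ c ^ 2 / 2) :
    IntegrableOn (weightedIntegrand b f n c) (Ioi T) := by
  refine (hfint.const_mul (n ! * exp (c * M + (m * c + 1 - c ^ 2 / 2) * T))).mono'
    ((continuousOn_weightedIntegrand hb hfc c).aestronglyMeasurable measurableSet_Ioi) ?_
  filter_upwards [ae_restrict_mem measurableSet_Ioi] with s hs
  rw [norm_of_nonneg (weightedIntegrand_nonneg (hT.trans hs.le) (hf s hs))]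
  exact weightedIntegrand_le (hgrowth s hs) hc hcq hT hs.le (hf s hs)

lemma setIntegral_weightedIntegrand_Ioi_le {M m c T : ℝ} (hT : 0 ≤ T)
    (hgrowth : ∀ s > T, b s ≤ M + m * s) (hfint : IntegrableOn f (Ioi T))
    (hf : ∀ s > T, 0 ≤ f s) (hc : 0 ≤ c) (hcq : m * c + 1 ≤ c ^ 2 / 2) :
    ∫ s in Ioi T, weightedIntegrand b f n c s ≤
      n ! * (∫ s in Ioi T, f s) * exp (c * M + (m * c + 1 - c ^ 2 / 2) * T) := by
  calc ∫ s in Ioi T, weightedIntegrand b f n c s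
      ≤ ∫ s in Ioi T, n ! * exp (c * M + (m * c + 1 - c ^ 2 / 2) * T) * f s := by
        refine integral_mono_of_nonneg ?_ (hfint.const_mul _) ?_ <;>
          filter_upwards [ae_restrict_mem measurableSet_Ioi] with s hs
        · exact weightedIntegrand_nonneg (hT.trans hs.le) (hf s hs)
        · exact weightedIntegrand_le (hgrowth s hs) hc hcq hT hs.le (hf s hs)
    _ = _ := by rw [integral_const_mul]; ring

lemma exists_exp_mul_le_setIntegral_Icc {a₁ a₂ : ℝ} (ha₁ : 0 < a₁) (ha : a₁ < a₂)
    (hb : ContinuousOn b (Icc a₁ a₂)) (hf : ContinuousOn f (Icc a₁ a₂))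
    (hfpos : ∀ s ∈ Icc a₁ a₂, 0 < f s) :
    ∃ B, ∃ K > 0, ∀ c ≥ 0,
      K * exp (-c ^ 2 * a₂ / 2 + c * B) ≤ ∫ s in Icc a₁ a₂, weightedIntegrand b f n c s := by
  obtain ⟨sB, -, hB⟩ := isCompact_Icc.exists_isMinOn (nonempty_Icc.2 ha.le) hb
  obtain ⟨sK, hsK, hK⟩ := isCompact_Icc.exists_isMinOn (f := fun s => s ^ n * f s)
    (nonempty_Icc.2 ha.le) ((continuousOn_pow n).mul hf)
  have hsK₀ : 0 < sK := ha₁.trans_le hsK.1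
  have hfK := hfpos sK hsK
  refine ⟨b sB, sK ^ n * f sK * (a₂ - a₁), by have := sub_pos.2 ha; positivity, fun c hc => ?_⟩
  have hpt : ∀ s ∈ Icc a₁ a₂,
      exp (-c ^ 2 * a₂ / 2 + c * b sB) * (sK ^ n * f sK) ≤ weightedIntegrand b f n c s := by
    intro s hs
    have hquad : c ^ 2 * s ≤ c ^ 2 * a₂ := mul_le_mul_of_nonneg_left hs.2 (sq_nonneg c)
    have hlin : c * b sB ≤ c * b s := mul_le_mul_of_nonneg_left (hB hs) hc
    rw [weightedIntegrand, mul_assoc]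
    exact mul_le_mul (exp_le_exp.2 (by linarith)) (hK hs) (by positivity) (exp_pos _).le
  calc sK ^ n * f sK * (a₂ - a₁) * exp (-c ^ 2 * a₂ / 2 + c * b sB)
      = exp (-c ^ 2 * a₂ / 2 + c * b sB) * (sK ^ n * f sK) * volume.real (Icc a₁ a₂) := by
        rw [Real.volume_real_Icc_of_le ha.le]
        ring
    _ ≤ _ := setIntegral_ge_of_const_le_real measurableSet_Icc measure_Icc_lt_top.ne hpt
        (continuousOn_weightedIntegrand hb hf c).integrableOn_Icc

lemma exists_exp_mul_le_setIntegral_window {t ε : ℝ} (ht : 0 ≤ t) (hε : 0 < ε)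
    (hb : ContinuousOn b (Icc t (t + ε))) (hf : ContinuousOn f (Icc t (t + ε)))
    (hfpos : ∀ s ∈ Ioc t (t + ε), 0 < f s) :
    ∃ B, ∃ K > 0, ∀ c ≥ 0, K * exp (-c ^ 2 * (t + ε / 2) / 2 + c * B) ≤
      ∫ s in Icc t (t + ε), weightedIntegrand b f n c s := by
  have hsub : Icc (t + ε / 4) (t + ε / 2) ⊆ Ioc t (t + ε) :=
    Icc_subset_Ioc (by linarith) (by linarith)
  have hsub' := hsub.trans Ioc_subset_Icc_self
  obtain ⟨B, K, hK, hlow⟩ := exists_exp_mul_le_setIntegral_Icc (n := n) (by linarith)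
    (by linarith) (hb.mono hsub') (hf.mono hsub') fun s hs => hfpos s (hsub hs)
  refine ⟨B, K, hK, fun c hc => (hlow c hc).trans ?_⟩
  rw [integral_Icc_eq_integral_Ioc (x := t)]
  refine setIntegral_mono_set ((continuousOn_weightedIntegrand hb hf c).integrableOn_Icc.mono_set
    Ioc_subset_Icc_self) ?_ hsub.eventuallyLE
  filter_upwards [ae_restrict_mem measurableSet_Ioc] with s hs
  exact weightedIntegrand_nonneg (ht.trans hs.1.le) (hfpos s hs).le

end WeightedIntegrand

theorem ratio_tendsto_one_general (b f : ℝ → ℝ) (M m t ε : ℝ) (n : ℕ)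
    (hb : ContDiffOn ℝ 1 b (Ici 0))
    (hgrowth : ∀ s ≥ (0 : ℝ), b s ≤ M + m * s)
    (hfc : ContinuousOn f (Ici 0)) (hfint : IntegrableOn f (Ici 0))
    (hfpos : ∀ s > (0 : ℝ), 0 < f s)
    (ht : 0 ≤ t) (hε : 0 < ε) :
    Tendsto (fun c =>
        (∫ s in Ici t, Real.exp (-c ^ 2 * s / 2 + c * b s) * s ^ n * f s) /
        (∫ s in Icc t (t + ε), Real.exp (-c ^ 2 * s / 2 + c * b s) * s ^ n * f s))
      atTop (nhds 1) := by
  set w := weightedIntegrand b f n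
  show Tendsto (fun c => (∫ s in Ici t, w c s) / ∫ s in Icc t (t + ε), w c s) atTop (nhds 1)
  have hbc : ContinuousOn b (Ici 0) := hb.continuousOn
  have hwindow : Icc t (t + ε) ⊆ Ici 0 := fun s hs => ht.trans hs.1
  have htail : Ioi (t + ε) ⊆ Ici 0 := fun s hs => mem_Ici.2 (by linarith [mem_Ioi.1 hs])
  have hpos : ∀ s > t + ε, 0 ≤ f s := fun s hs => (hfpos s (by linarith)).le
  obtain ⟨B, K, hK, hlow⟩ := exists_exp_mul_le_setIntegral_window (n := n) ht hε
    (hbc.mono hwindow) (hfc.mono hwindow) fun s hs => hfpos s (by linarith [hs.1])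
  have hlarge := eventually_mul_add_one_le_sq_div_two m
  have hexponent : Tendsto (fun c : ℝ =>
      (c * M + (m * c + 1 - c ^ 2 / 2) * (t + ε)) - (-c ^ 2 * (t + ε / 2) / 2 + c * B))
      atTop atBot :=
    (tendsto_quadratic_atBot (by linarith : -(ε / 4) < 0) (M + m * (t + ε) - B) (t + ε)).congr
      fun c => by ring
  have hsplit : ∀ᶠ c in atTop,
      ∫ s in Ici t, w c s = (∫ s in Icc t (t + ε), w c s) + ∫ s in Ioi (t + ε), w c s := by
    filter_upwards [hlarge] with c hc
    exact setIntegral_Ici_eq_Icc_add_Ioi (by linarith)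
      (continuousOn_weightedIntegrand (hbc.mono hwindow) (hfc.mono hwindow) c).integrableOn_Icc
      (integrableOn_weightedIntegrand_Ioi (by linarith) (fun s hs => hgrowth s (htail hs))
        (hbc.mono htail) (hfc.mono htail) (hfint.mono_set htail) hpos hc.1 hc.2)
  refine (tendsto_add_div_self_of_le_exp_of_exp_le (C₁ := n ! * ∫ s in Ioi (t + ε), f s) hK
    ?_ ?_ ((eventually_ge_atTop 0).mono hlow) hexponent).congr'
    (hsplit.mono fun c hc => by rw [← hc])
  · exact Eventually.of_forall fun c => setIntegral_nonneg measurableSet_Ioi fun s hs =>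
      weightedIntegrand_nonneg (htail hs) (hpos s hs)
  · exact hlarge.mono fun c hc => setIntegral_weightedIntegrand_Ioi_le (by linarith)
      (fun s hs => hgrowth s (htail hs)) (hfint.mono_set htail) hpos hc.1 hc.2

/-- For a continuously differentiable boundary `b` with linear growth and a continuous,
integrable, strictly positive density `f`, the ratio
`I^f_{[t,∞)}(n)(c) / I^f_{[t,t+ε]}(n)(c)` tends to `1` as `c → ∞`. -/
theorem ratio_tendsto_one (b f : ℝ → ℝ) (M m t ε : ℝ) (n : ℕ)
    (hb : ContDiffOn ℝ 1 b (Ici 0))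
    (hM : 0 < M) (hm : 0 < m) (hgrowth : ∀ s ≥ (0 : ℝ), b s ≤ M + m * s)
    (hfc : ContinuousOn f (Ici 0)) (hfint : IntegrableOn f (Ici 0))
    (hfpos : ∀ s > (0 : ℝ), 0 < f s)
    (ht : 0 ≤ t) (hε : 0 < ε) :
    Tendsto (fun c =>
        (∫ s in Ici t, Real.exp (-c ^ 2 * s / 2 + c * b s) * s ^ n * f s) /
        (∫ s in Icc t (t + ε), Real.exp (-c ^ 2 * s / 2 + c * b s) * s ^ n * f s))
      atTop (nhds 1) :=
  ratio_tendsto_one_general b f M m t ε n hb hgrowth hfc hfint hfpos ht hε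
end

section
/- Let b : [0,∞) → ℝ be continuously differentiable with linear growth (there exist M, m > 0 with b(t) ≤ M + m·t for all t ≥ 0), and let f, f̃ : [0,∞) → ℝ be continuous integrable functions with f(t) ≠ f̃(t) for a fixed t ≥ 0. Then for every ε > 0 and n ∈ ℕ, lim_{c→∞} [∫_t^∞ e^{-c²s/2 + c·b(s)} sⁿ (f(s) - f̃(s)) ds] / [∫_t^{t+ε} e^{-c²s/2 + c·b(s)} sⁿ (f(s) - f̃(s)) ds] = 1 (in particular the denominator is nonzero for all sufficiently large c). -/
/-!
Write `g = f - f̃`; replacing `g` by `-g` we may assume `g t > 0`. By continuity `g ≥ g t / 2` on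
some `[t, t + δ]`, so the integral over `[t, t + δ]` is at least `K exp (-(t + δ/2) c² / 2 + β c)`.
On `[a, ∞)` the linear growth of `b` and `sⁿ ≤ e^{ns}` bound the weight by `exp (-a c² / 2 + O(c))`,
and `g` is integrable, so the integrals over `(t + δ, t + ε]` and `(t + ε, ∞)` are `o` of that
lower bound. Hence the denominator is eventually positive, and the numerator exceeds it by a
negligible tail.
-/

open MeasureTheory Real Filter Set Asymptotics Topology

/-- The paper's `D_J(n)(c)`, with `g` standing for `f - f̃`. -/
noncomputable def weightedIntegral (b g : ℝ → ℝ) (n : ℕ) (J : Set ℝ) (c : ℝ) : ℝ :=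
  ∫ s in J, exp (-c ^ 2 * s / 2 + c * b s) * s ^ n * g s

lemma weightedIntegral_neg (b g : ℝ → ℝ) (n : ℕ) (J : Set ℝ) (c : ℝ) :
    weightedIntegral b (-g) n J c = -weightedIntegral b g n J c := by
  simp only [weightedIntegral, Pi.neg_apply, mul_neg, integral_neg]

lemma tendsto_quadratic_atTop {α : ℝ} (hα : 0 < α) (p q : ℝ) :
    Tendsto (fun c : ℝ => α * c ^ 2 + p * c + q) atTop atTop := by
  have h : Tendsto (fun c : ℝ => c * (α * c + p)) atTop atTop :=
    tendsto_id.atTop_mul_atTop₀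
      (tendsto_atTop_add_const_right _ p (tendsto_id.const_mul_atTop hα))
  exact tendsto_atTop_add_const_right _ q (h.congr fun c => by ring)

lemma isLittleO_exp_quadratic {α β : ℝ} (hαβ : α < β) (p q p' : ℝ) :
    (fun c : ℝ => exp (-β * c ^ 2 + p * c + q)) =o[atTop] fun c => exp (-α * c ^ 2 + p' * c) :=
  isLittleO_exp_comp_exp_comp.2 <|
    (tendsto_quadratic_atTop (sub_pos.2 hαβ) (p' - p) (-q)).congr fun c => by ring

lemma eventually_ne_zero_and_tendsto_add_div {α : Type*} {l : Filter α} {A B T L : α → ℝ}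
    {K : ℝ} (hK : 0 < K) (hL : ∀ x, 0 < L x) (hA : ∀ᶠ x in l, K * L x ≤ A x) (hB : B =o[l] L)
    (hT : T =o[l] L) :
    (∀ᶠ x in l, A x + B x ≠ 0) ∧ Tendsto (fun x => (A x + B x + T x) / (A x + B x)) l (𝓝 1) := by
  have hD : ∀ᶠ x in l, K / 2 * L x ≤ A x + B x := by
    filter_upwards [hA, hB.bound (half_pos hK)] with x hAx hBx
    rw [Real.norm_eq_abs, Real.norm_eq_abs, abs_of_pos (hL x)] at hBx
    linarith [neg_abs_le (B x)]
  have hDne : ∀ᶠ x in l, A x + B x ≠ 0 :=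
    hD.mono fun x h => ((mul_pos (half_pos hK) (hL x)).trans_le h).ne'
  refine ⟨hDne, (isEquivalent_iff_tendsto_one hDne).1 ?_⟩
  have hLD : L =O[l] fun x => A x + B x := by
    refine IsBigO.of_bound (2 / K) (hD.mono fun x h => ?_)
    rw [norm_of_nonneg (hL x).le, norm_of_nonneg ((mul_pos (half_pos hK) (hL x)).le.trans h),
      div_mul_eq_mul_div, le_div_iff₀ hK]
    linarith
  exact (hT.trans_isBigO hLD).congr_left fun x => by simp

lemma eventually_exponent_nonneg (m : ℝ) (n : ℕ) :
    ∀ᶠ c : ℝ in atTop, 0 ≤ c ∧ 0 ≤ c ^ 2 / 2 - c * m - n :=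
  (eventually_ge_atTop 0).and <|
    ((tendsto_quadratic_atTop one_half_pos (-m) (-n)).eventually_ge_atTop 0).mono fun c h => by
      linarith

lemma exists_le_on_Icc_of_lt {g : ℝ → ℝ} {t y ε : ℝ} (hg : ContinuousWithinAt g (Ici t) t)
    (hy : y < g t) (hε : 0 < ε) :
    ∃ δ > 0, δ ≤ ε ∧ ∀ s ∈ Icc t (t + δ), y ≤ g s := by
  obtain ⟨u, htu, hu⟩ := mem_nhdsGE_iff_exists_Icc_subset.1 (hg (Ioi_mem_nhds hy))
  refine ⟨min (u - t) ε, lt_min (sub_pos.2 htu) hε, min_le_right _ _, fun s hs => ?_⟩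
  exact (hu ⟨hs.1, by linarith [hs.2, min_le_left (u - t) ε]⟩).le

section

variable {b g : ℝ → ℝ} {M m : ℝ} {n : ℕ}

lemma weight_le_exp (hgrowth : ∀ s ≥ (0 : ℝ), b s ≤ M + m * s) {a c s : ℝ} (hc : 0 ≤ c)
    (ha : 0 ≤ a) (has : a ≤ s) (hβ : 0 ≤ c ^ 2 / 2 - c * m - n) :
    exp (-c ^ 2 * s / 2 + c * b s) * s ^ n ≤
      exp (-(a / 2) * c ^ 2 + (M + a * m) * c + a * n) := by
  have hs : 0 ≤ s := ha.trans has
  have hpow : s ^ n ≤ exp (n * s) := by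
    rw [exp_nat_mul]
    exact pow_le_pow_left₀ hs (by linarith [add_one_le_exp s]) n
  have hb : c * b s ≤ c * (M + m * s) := mul_le_mul_of_nonneg_left (hgrowth s hs) hc
  calc exp (-c ^ 2 * s / 2 + c * b s) * s ^ n
      ≤ exp (-c ^ 2 * s / 2 + c * (M + m * s)) * exp (n * s) := by gcongr
    _ = exp (c * M - s * (c ^ 2 / 2 - c * m - n)) := by rw [← exp_add]; ring_nf
    _ ≤ exp (-(a / 2) * c ^ 2 + (M + a * m) * c + a * n) := by
        gcongr
        nlinarith [mul_le_mul_of_nonneg_right has hβ]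

lemma integrableOn_weight_mul (hbc : ContinuousOn b (Ici 0))
    (hgrowth : ∀ s ≥ (0 : ℝ), b s ≤ M + m * s) (hgc : ContinuousOn g (Ici 0))
    (hg : IntegrableOn g (Ici 0)) {c : ℝ} (hc : 0 ≤ c) (hβ : 0 ≤ c ^ 2 / 2 - c * m - n) :
    IntegrableOn (fun s => exp (-c ^ 2 * s / 2 + c * b s) * s ^ n * g s) (Ici 0) := by
  have hcont : ContinuousOn (fun s => exp (-c ^ 2 * s / 2 + c * b s) * s ^ n * g s) (Ici 0) := by
    fun_prop
  refine (hg.norm.const_mul (exp (c * M))).mono' (hcont.aestronglyMeasurable measurableSet_Ici) ?_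
  filter_upwards [ae_restrict_mem measurableSet_Ici] with s hs
  rw [norm_mul, norm_of_nonneg (mul_nonneg (exp_pos _).le (pow_nonneg hs n))]
  gcongr
  simpa [mul_comm] using weight_le_exp hgrowth hc le_rfl hs hβ

lemma eventually_weightedIntegral_union (hbc : ContinuousOn b (Ici 0))
    (hgrowth : ∀ s ≥ (0 : ℝ), b s ≤ M + m * s) (hgc : ContinuousOn g (Ici 0))
    (hg : IntegrableOn g (Ici 0)) :
    ∀ᶠ c in atTop, ∀ J₁ J₂ : Set ℝ, Disjoint J₁ J₂ → MeasurableSet J₂ →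
      J₁ ∪ J₂ ⊆ Ici 0 → weightedIntegral b g n (J₁ ∪ J₂) c =
        weightedIntegral b g n J₁ c + weightedIntegral b g n J₂ c := by
  filter_upwards [eventually_exponent_nonneg m n] with c ⟨hc, hβ⟩ J₁ J₂ hdisj hJ₂ hJ
  have hint := integrableOn_weight_mul hbc hgrowth hgc hg hc hβ
  exact setIntegral_union hdisj hJ₂ (hint.mono_set (subset_union_left.trans hJ))
    (hint.mono_set (subset_union_right.trans hJ))

lemma weightedIntegral_isBigO (hgrowth : ∀ s ≥ (0 : ℝ), b s ≤ M + m * s)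
    (hg : IntegrableOn g (Ici 0)) {a : ℝ} (ha : 0 ≤ a) {J : Set ℝ} (hJm : MeasurableSet J)
    (hJ : J ⊆ Ici a) :
    weightedIntegral b g n J =O[atTop]
      fun c => exp (-(a / 2) * c ^ 2 + (M + a * m) * c + a * n) := by
  have hJ₀ : J ⊆ Ici 0 := hJ.trans (Ici_subset_Ici.2 ha)
  refine IsBigO.of_bound (∫ s in Ici 0, ‖g s‖) ?_
  filter_upwards [eventually_exponent_nonneg m n] with c ⟨hc, hβ⟩
  set E := exp (-(a / 2) * c ^ 2 + (M + a * m) * c + a * n)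
  calc ‖weightedIntegral b g n J c‖ ≤ ∫ s in J, E * ‖g s‖ := by
        refine norm_integral_le_of_norm_le ((IntegrableOn.mono_set hg.norm hJ₀).const_mul E) ?_
        filter_upwards [ae_restrict_mem hJm] with s hs
        rw [norm_mul, norm_of_nonneg (mul_nonneg (exp_pos _).le (pow_nonneg (hJ₀ hs) n))]
        gcongr
        exact weight_le_exp hgrowth hc ha (hJ hs) hβ
    _ = E * ∫ s in J, ‖g s‖ := integral_const_mul E _
    _ ≤ E * ∫ s in Ici 0, ‖g s‖ :=
        mul_le_mul_of_nonneg_left (setIntegral_mono_set hg.norm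
          (Eventually.of_forall fun s => norm_nonneg _) hJ₀.eventuallyLE) (exp_pos _).le
    _ = (∫ s in Ici 0, ‖g s‖) * ‖E‖ := by rw [norm_of_nonneg (exp_pos _).le, mul_comm]

lemma le_weightedIntegral_Icc {p q γ β c : ℝ} (hbc : ContinuousOn b (Icc p q))
    (hgc : ContinuousOn g (Icc p q)) (hp : 0 ≤ p) (hpq : p ≤ q) (hγ : 0 ≤ γ)
    (hgγ : ∀ s ∈ Icc p q, γ ≤ g s) (hbβ : ∀ s ∈ Icc p q, β ≤ b s) (hc : 0 ≤ c) :
    (q - p) * (p ^ n * γ) * exp (-(q / 2) * c ^ 2 + β * c) ≤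
      weightedIntegral b g n (Icc p q) c := by
  have hint : IntegrableOn (fun s => exp (-c ^ 2 * s / 2 + c * b s) * s ^ n * g s) (Icc p q) :=
    ContinuousOn.integrableOn_Icc (by fun_prop)
  calc (q - p) * (p ^ n * γ) * exp (-(q / 2) * c ^ 2 + β * c)
      = ∫ _ in Icc p q, exp (-(q / 2) * c ^ 2 + β * c) * p ^ n * γ := by
        rw [setIntegral_const, volume_real_Icc_of_le hpq, smul_eq_mul]; ring
    _ ≤ weightedIntegral b g n (Icc p q) c := by
        refine setIntegral_mono_on (integrableOn_const measure_Icc_lt_top.ne) hint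
          measurableSet_Icc fun s hs => ?_
        have hbs : β * c ≤ c * b s := by nlinarith [hbβ s hs]
        have hqs : -(q / 2) * c ^ 2 ≤ -c ^ 2 * s / 2 := by nlinarith [hs.2, sq_nonneg c]
        gcongr
        · exact mul_nonneg (exp_pos _).le (pow_nonneg (hp.trans hs.1) n)
        · exact hs.1
        · exact hgγ s hs

lemma exists_le_weightedIntegral_Icc (hbc : ContinuousOn b (Ici 0))
    (hgrowth : ∀ s ≥ (0 : ℝ), b s ≤ M + m * s) (hgc : ContinuousOn g (Ici 0))
    (hg : IntegrableOn g (Ici 0)) {t δ γ : ℝ} (ht : 0 ≤ t) (hδ : 0 < δ) (hγ : 0 < γ)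
    (hgγ : ∀ s ∈ Icc t (t + δ), γ ≤ g s) :
    ∃ K > 0, ∃ β : ℝ, ∀ᶠ c in atTop,
      K * exp (-((t + δ / 2) / 2) * c ^ 2 + β * c) ≤
        weightedIntegral b g n (Icc t (t + δ)) c := by
  have hpq : Icc (t + δ / 4) (t + δ / 2) ⊆ Icc t (t + δ) :=
    Icc_subset_Icc (by linarith) (by linarith)
  have hIcc : Icc t (t + δ) ⊆ Ici 0 := fun s hs => ht.trans hs.1
  obtain ⟨β, hβ⟩ := isCompact_Icc.bddBelow_image (hbc.mono (hpq.trans hIcc))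
  refine ⟨(t + δ / 2 - (t + δ / 4)) * ((t + δ / 4) ^ n * γ),
    mul_pos (by linarith) (mul_pos (pow_pos (by linarith) n) hγ), β, ?_⟩
  filter_upwards [eventually_exponent_nonneg m n] with c ⟨hc, hβc⟩
  have hint := (integrableOn_weight_mul hbc hgrowth hgc hg hc hβc).mono_set hIcc
  -- `sⁿ` may vanish at `s = t`, and the rate `(t + δ/2) / 2` must stay below the rate
  -- `(t + δ) / 2` of the rest of `[t, t + ε]`: hence the inner interval `[t + δ/4, t + δ/2]`.
  refine (le_weightedIntegral_Icc (hbc.mono (hpq.trans hIcc)) (hgc.mono (hpq.trans hIcc))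
    (by linarith) (by linarith) hγ.le (fun s hs => hgγ s (hpq hs))
    (fun s hs => hβ (mem_image_of_mem b hs)) hc).trans
    (setIntegral_mono_set hint ?_ hpq.eventuallyLE)
  filter_upwards [ae_restrict_mem measurableSet_Icc] with s hs
  exact mul_nonneg (mul_nonneg (exp_pos _).le (pow_nonneg (hIcc hs) n))
    (hγ.le.trans (hgγ s hs))

lemma weightedIntegral_ratio_tendsto_one_of_pos (hbc : ContinuousOn b (Ici 0))
    (hgrowth : ∀ s ≥ (0 : ℝ), b s ≤ M + m * s) (hgc : ContinuousOn g (Ici 0))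
    (hg : IntegrableOn g (Ici 0)) {t ε : ℝ} (ht : 0 ≤ t) (hgt : 0 < g t) (hε : 0 < ε) :
    (∀ᶠ c in atTop, weightedIntegral b g n (Icc t (t + ε)) c ≠ 0) ∧
    Tendsto (fun c => weightedIntegral b g n (Ici t) c / weightedIntegral b g n (Icc t (t + ε)) c)
      atTop (𝓝 1) := by
  obtain ⟨δ, hδ, hδε, hgδ⟩ :=
    exists_le_on_Icc_of_lt ((hgc t ht).mono (Ici_subset_Ici.2 ht)) (half_lt_self hgt) hε
  obtain ⟨K, hK, β, hnear⟩ :=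
    exists_le_weightedIntegral_Icc (n := n) hbc hgrowth hgc hg ht hδ (half_pos hgt) hgδ
  have hsmall : ∀ {a : ℝ} {J : Set ℝ}, t + δ / 2 < a → MeasurableSet J → J ⊆ Ici a →
      weightedIntegral b g n J =o[atTop] fun c => exp (-((t + δ / 2) / 2) * c ^ 2 + β * c) :=
    fun ha hJm hJ => (weightedIntegral_isBigO hgrowth hg (by linarith) hJm hJ).trans_isLittleO
      (isLittleO_exp_quadratic (by linarith) _ _ _)
  have hmid := hsmall (a := t + δ) (J := Ioc (t + δ) (t + ε)) (by linarith) measurableSet_Ioc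
    fun s hs => hs.1.le
  have htail := hsmall (a := t + ε) (by linarith) measurableSet_Ioi Ioi_subset_Ici_self
  obtain ⟨hne, hlim⟩ :=
    eventually_ne_zero_and_tendsto_add_div hK (fun c => exp_pos _) hnear hmid htail
  have hunion := eventually_weightedIntegral_union (n := n) hbc hgrowth hgc hg
  have hD : ∀ᶠ c in atTop, weightedIntegral b g n (Icc t (t + δ)) c +
      weightedIntegral b g n (Ioc (t + δ) (t + ε)) c =
        weightedIntegral b g n (Icc t (t + ε)) c := by
    filter_upwards [hunion] with c hc
    have hsplit := Icc_union_Ioc_eq_Icc (by linarith : t ≤ t + δ) (by linarith : t + δ ≤ t + ε)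
    rw [← hc _ _ ((Iic_disjoint_Ioc le_rfl).mono_left Icc_subset_Iic_self) measurableSet_Ioc
      (hsplit ▸ fun s hs => ht.trans hs.1), hsplit]
  have hN : ∀ᶠ c in atTop, weightedIntegral b g n (Icc t (t + ε)) c +
      weightedIntegral b g n (Ioi (t + ε)) c = weightedIntegral b g n (Ici t) c := by
    filter_upwards [hunion] with c hc
    have hsplit := Icc_union_Ioi_eq_Ici (by linarith : t ≤ t + ε)
    rw [← hc _ _ ((Iic_disjoint_Ioi le_rfl).mono_left Icc_subset_Iic_self) measurableSet_Ioi
      (hsplit ▸ Ici_subset_Ici.2 ht), hsplit]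
  refine ⟨(hne.and hD).mono fun c h => h.2 ▸ h.1, hlim.congr' ?_⟩
  filter_upwards [hD, hN] with c hDc hNc
  rw [hDc, hNc]

lemma weightedIntegral_ratio_tendsto_one (hbc : ContinuousOn b (Ici 0))
    (hgrowth : ∀ s ≥ (0 : ℝ), b s ≤ M + m * s) (hgc : ContinuousOn g (Ici 0))
    (hg : IntegrableOn g (Ici 0)) {t ε : ℝ} (ht : 0 ≤ t) (hgt : g t ≠ 0) (hε : 0 < ε) :
    (∀ᶠ c in atTop, weightedIntegral b g n (Icc t (t + ε)) c ≠ 0) ∧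
    Tendsto (fun c => weightedIntegral b g n (Ici t) c / weightedIntegral b g n (Icc t (t + ε)) c)
      atTop (𝓝 1) := by
  rcases hgt.lt_or_gt with hneg | hpos
  · have h := weightedIntegral_ratio_tendsto_one_of_pos (g := -g) (n := n) hbc hgrowth hgc.neg
      hg.neg ht (neg_pos.2 hneg) hε
    simpa only [weightedIntegral_neg, neg_div_neg_eq, ne_eq, neg_eq_zero] using h
  · exact weightedIntegral_ratio_tendsto_one_of_pos hbc hgrowth hgc hg ht hpos hε

end

theorem difference_ratio_tendsto_one_general (b f ftil : ℝ → ℝ) (M m t ε : ℝ) (n : ℕ)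
    (hb : ContDiffOn ℝ 1 b (Ici 0))
    (hgrowth : ∀ s ≥ (0 : ℝ), b s ≤ M + m * s)
    (hfc : ContinuousOn f (Ici 0)) (hfint : IntegrableOn f (Ici 0))
    (hftc : ContinuousOn ftil (Ici 0)) (hftint : IntegrableOn ftil (Ici 0))
    (ht : 0 ≤ t) (hne : f t ≠ ftil t) (hε : 0 < ε) :
    (∀ᶠ c in atTop,
        (∫ s in Icc t (t + ε),
          Real.exp (-c ^ 2 * s / 2 + c * b s) * s ^ n * (f s - ftil s)) ≠ 0) ∧
    Tendsto (fun c =>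
        (∫ s in Ici t, Real.exp (-c ^ 2 * s / 2 + c * b s) * s ^ n * (f s - ftil s)) /
        (∫ s in Icc t (t + ε),
          Real.exp (-c ^ 2 * s / 2 + c * b s) * s ^ n * (f s - ftil s)))
      atTop (nhds 1) :=
  weightedIntegral_ratio_tendsto_one hb.continuousOn hgrowth (hfc.sub hftc) (hfint.sub hftint) ht
    (sub_ne_zero.2 hne) hε

/-- For a continuously differentiable boundary `b` with linear growth and continuous,
integrable `f, f̃` with `f t ≠ f̃ t`, the ratio `D_{[t,∞)}(n)(c) / D_{[t,t+ε]}(n)(c)`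
tends to `1` as `c → ∞`; in particular the denominator is eventually nonzero. -/
theorem difference_ratio_tendsto_one (b f ftil : ℝ → ℝ) (M m t ε : ℝ) (n : ℕ)
    (hb : ContDiffOn ℝ 1 b (Ici 0))
    (hM : 0 < M) (hm : 0 < m) (hgrowth : ∀ s ≥ (0 : ℝ), b s ≤ M + m * s)
    (hfc : ContinuousOn f (Ici 0)) (hfint : IntegrableOn f (Ici 0))
    (hftc : ContinuousOn ftil (Ici 0)) (hftint : IntegrableOn ftil (Ici 0))
    (ht : 0 ≤ t) (hne : f t ≠ ftil t) (hε : 0 < ε) :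
    (∀ᶠ c in atTop,
        (∫ s in Icc t (t + ε),
          Real.exp (-c ^ 2 * s / 2 + c * b s) * s ^ n * (f s - ftil s)) ≠ 0) ∧
    Tendsto (fun c =>
        (∫ s in Ici t, Real.exp (-c ^ 2 * s / 2 + c * b s) * s ^ n * (f s - ftil s)) /
        (∫ s in Icc t (t + ε),
          Real.exp (-c ^ 2 * s / 2 + c * b s) * s ^ n * (f s - ftil s)))
      atTop (nhds 1) :=
  difference_ratio_tendsto_one_general b f ftil M m t ε n hb hgrowth hfc hfint hftc hftint ht hne hε
end

section
/- Let b : [0,∞) → ℝ be continuous with linear growth (there exist M, m > 0 with b(t) ≤ M + m·t for all t ≥ 0), let f : [0,∞) → ℝ be continuous and integrable, and fix n ∈ ℕ. Then the function c ↦ ∫₀^∞ e^{-c²s/2 + c·b(s)} sⁿ f(s) ds is real-analytic on (2m + 2, ∞). -/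
/-!
Extend `c` to the complex plane. For each `s` the integrand is entire in `c`, and on the open set
of `z` with `Re z > 0` and `Re (z²) > 2 m Re z` the growth bound gives
`|exp (-z² s / 2 + z b(s))| ≤ exp (Re z · M - (Re (z²) - 2 m Re z) s / 2)`, which decays
exponentially in `s`; so the integrand is locally dominated by a multiple of `|f|`. Cauchy's
estimate turns this into a locally dominated derivative, the integral is holomorphic there, and
real points `c > 2m` lie in that set.
-/

open MeasureTheory Real Filter Set

open scoped Nat Topology

lemma pow_mul_exp_neg_mul_le_factorial_div {κ s : ℝ} (hκ : 0 < κ) (hs : 0 ≤ s) (n : ℕ) :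
    s ^ n * exp (-(κ * s)) ≤ n ! / κ ^ n := by
  have h := Real.pow_div_factorial_le_exp _ (mul_nonneg hκ.le hs) n
  rw [div_le_iff₀ (by positivity), mul_pow] at h
  rw [le_div_iff₀ (by positivity), exp_neg]
  calc s ^ n * (exp (κ * s))⁻¹ * κ ^ n = κ ^ n * s ^ n * (exp (κ * s))⁻¹ := by ring
    _ ≤ exp (κ * s) * n ! * (exp (κ * s))⁻¹ := by gcongr
    _ = n ! := by field_simp

section HolomorphicParametricIntegral

variable {α : Type*} [MeasurableSpace α] {μ : Measure α} {G : ℂ → α → ℂ}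

lemma aestronglyMeasurable_deriv_of_differentiable (hG : ∀ c, AEStronglyMeasurable (G c) μ)
    (hdiff : ∀ᵐ s ∂μ, Differentiable ℂ (G · s)) (c : ℂ) :
    AEStronglyMeasurable (fun s ↦ deriv (G · s) c) μ := by
  obtain ⟨u, hu⟩ := (𝓝[≠] c).exists_seq_tendsto
  refine aestronglyMeasurable_of_tendsto_ae atTop (f := fun k s ↦ slope (G · s) c (u k))
    (fun k ↦ ((hG (u k)).sub (hG c)).const_smul _) ?_
  filter_upwards [hdiff] with s hs
  exact (hasDerivAt_iff_tendsto_slope.mp (hs c).hasDerivAt).comp hu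

theorem analyticOnNhd_integral_of_locally_dominated {U : Set ℂ} (hU : IsOpen U)
    (hG : ∀ c, AEStronglyMeasurable (G c) μ) (hdiff : ∀ᵐ s ∂μ, Differentiable ℂ (G · s))
    (hdom : ∀ c ∈ U, ∃ V ∈ 𝓝 c, ∃ B : α → ℝ, Integrable B μ ∧ ∀ᵐ s ∂μ, ∀ z ∈ V, ‖G z s‖ ≤ B s) :
    AnalyticOnNhd ℂ (fun c ↦ ∫ s, G c s ∂μ) U := by
  refine DifferentiableOn.analyticOnNhd (fun c hc ↦ ?_) hU
  obtain ⟨V, hV, B, hB, hGB⟩ := hdom c hc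
  obtain ⟨ε, hε, hεV⟩ := Metric.mem_nhds_iff.mp hV
  have hr : 0 < ε / 2 := half_pos hε
  -- Cauchy's estimate on circles of radius `ε / 2` inside `ball c ε` bounds the derivative.
  have hderiv_le :
      ∀ᵐ s ∂μ, ∀ z ∈ Metric.ball c (ε / 2), ‖deriv (G · s) z‖ ≤ B s / (ε / 2) := by
    filter_upwards [hdiff, hGB] with s hs hsB z hz
    refine Complex.norm_deriv_le_of_forall_mem_sphere_norm_le hr hs.diffContOnCl fun w hw ↦ ?_
    refine hsB w (hεV ?_)
    rw [Metric.mem_sphere] at hw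
    rw [Metric.mem_ball] at hz ⊢
    linarith [dist_triangle w z c]
  have hint : Integrable (G c) μ :=
    hB.mono' (hG c) (hGB.mono fun s hs ↦ hs c (mem_of_mem_nhds hV))
  exact (hasDerivAt_integral_of_dominated_loc_of_deriv_le (Metric.ball_mem_nhds c hr)
    (.of_forall hG) hint (aestronglyMeasurable_deriv_of_differentiable hG hdiff c) hderiv_le
    (hB.div_const _) (hdiff.mono fun s hs z _ ↦ (hs z).hasDerivAt)).2.differentiableAt
    |>.differentiableWithinAt

end HolomorphicParametricIntegral

lemma AnalyticOnNhd.re_comp_ofReal {F : ℂ → ℂ} {U : Set ℂ} {S : Set ℝ}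
    (hF : AnalyticOnNhd ℂ F U) (hS : MapsTo (↑) S U) : AnalyticOnNhd ℝ (fun x : ℝ ↦ (F x).re) S :=
  (Complex.reCLM.analyticOnNhd univ).comp
    (hF.restrictScalars.comp (Complex.ofRealCLM.analyticOnNhd S) hS) (mapsTo_univ _ _)

noncomputable def fredholmIntegrand (b f : ℝ → ℝ) (n : ℕ) (c : ℂ) (s : ℝ) : ℂ :=
  Complex.exp (-c ^ 2 * s / 2 + c * b s) * s ^ n * f s

def fredholmDomain (m : ℝ) : Set ℂ := {z | 0 < z.re ∧ 2 * m * z.re < (z ^ 2).re}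

section FredholmIntegrand

variable {b f : ℝ → ℝ} {n : ℕ}

lemma differentiable_fredholmIntegrand (s : ℝ) :
    Differentiable ℂ (fredholmIntegrand b f n · s) := by
  unfold fredholmIntegrand
  fun_prop

lemma fredholmIntegrand_ofReal (c s : ℝ) :
    fredholmIntegrand b f n c s = ↑(exp (-c ^ 2 * s / 2 + c * b s) * s ^ n * f s) := by
  simp [fredholmIntegrand]

lemma aestronglyMeasurable_fredholmIntegrand (hb : ContinuousOn b (Ioi 0))
    (hf : AEStronglyMeasurable f (volume.restrict (Ioi 0))) (c : ℂ) :
    AEStronglyMeasurable (fredholmIntegrand b f n c) (volume.restrict (Ioi 0)) := by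
  have hcont :
      ContinuousOn (fun s : ℝ ↦ Complex.exp (-c ^ 2 * s / 2 + c * b s) * s ^ n) (Ioi 0) := by
    have := Complex.continuous_ofReal.comp_continuousOn hb
    fun_prop
  exact (hcont.aestronglyMeasurable measurableSet_Ioi).mul
    (Complex.continuous_ofReal.comp_aestronglyMeasurable hf)

lemma norm_fredholmIntegrand (c : ℂ) {s : ℝ} (hs : 0 ≤ s) :
    ‖fredholmIntegrand b f n c s‖ = exp (-(c ^ 2).re * s / 2 + c.re * b s) * s ^ n * |f s| := by
  simp [fredholmIntegrand, Complex.norm_exp, abs_of_nonneg hs]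

lemma norm_fredholmIntegrand_le {M m A κ : ℝ} (hgrowth : ∀ s ≥ (0 : ℝ), b s ≤ M + m * s)
    (hκ : 0 < κ) {z : ℂ} (hz : 0 ≤ z.re) (hzA : z.re * M ≤ A)
    (hzκ : 2 * m * z.re + 2 * κ ≤ (z ^ 2).re) {s : ℝ} (hs : 0 ≤ s) :
    ‖fredholmIntegrand b f n z s‖ ≤ exp A * (n ! / κ ^ n) * |f s| := by
  have hexponent : -(z ^ 2).re * s / 2 + z.re * b s ≤ A + -(κ * s) := by
    have := mul_le_mul_of_nonneg_left (hgrowth s hs) hz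
    nlinarith
  rw [norm_fredholmIntegrand z hs]
  calc exp (-(z ^ 2).re * s / 2 + z.re * b s) * s ^ n * |f s|
      ≤ exp (A + -(κ * s)) * s ^ n * |f s| := by gcongr
    _ = exp A * (s ^ n * exp (-(κ * s))) * |f s| := by rw [exp_add]; ring
    _ ≤ exp A * (n ! / κ ^ n) * |f s| := by
        gcongr
        exact pow_mul_exp_neg_mul_le_factorial_div hκ hs n

lemma fredholmIntegrand_locally_dominated {M m : ℝ} (hgrowth : ∀ s ≥ (0 : ℝ), b s ≤ M + m * s)
    (hf : IntegrableOn f (Ioi 0)) {c : ℂ} (hc : c ∈ fredholmDomain m) :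
    ∃ V ∈ 𝓝 c, ∃ B : ℝ → ℝ, Integrable B (volume.restrict (Ioi 0)) ∧
      ∀ᵐ s ∂volume.restrict (Ioi 0), ∀ z ∈ V, ‖fredholmIntegrand b f n z s‖ ≤ B s := by
  obtain ⟨hc0, hcm⟩ := hc
  set κ := ((c ^ 2).re - 2 * m * c.re) / 4 with hκ_def
  have hκ : 0 < κ := by linarith
  have hV : ∀ᶠ z in 𝓝 c,
      0 < z.re ∧ z.re * M < c.re * M + 1 ∧ 2 * m * z.re + 2 * κ < (z ^ 2).re :=
    (continuousAt_const.eventually_lt (by fun_prop) hc0).and <|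
      (ContinuousAt.eventually_lt (by fun_prop) continuousAt_const (by linarith)).and
        (ContinuousAt.eventually_lt (by fun_prop) (by fun_prop) (by linarith))
  refine ⟨_, hV, fun s ↦ exp (c.re * M + 1) * (n ! / κ ^ n) * ‖f s‖, hf.norm.const_mul _, ?_⟩
  filter_upwards [ae_restrict_mem measurableSet_Ioi] with s hs z ⟨hz, hzM, hzκ⟩
  exact norm_fredholmIntegrand_le hgrowth hκ hz.le hzM.le hzκ.le (le_of_lt hs)

lemma isOpen_fredholmDomain (m : ℝ) : IsOpen (fredholmDomain m) :=
  (isOpen_lt continuous_const Complex.continuous_re).inter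
    (isOpen_lt (continuous_const.mul Complex.continuous_re)
      (Complex.continuous_re.comp (continuous_pow 2)))

lemma ofReal_mem_fredholmDomain {m c : ℝ} (hm : 0 ≤ m) (hc : 2 * m < c) :
    (c : ℂ) ∈ fredholmDomain m := by
  have hc0 : 0 < c := by linarith
  refine ⟨hc0, ?_⟩
  simp only [← Complex.ofReal_pow, Complex.ofReal_re]
  nlinarith

end FredholmIntegrand

theorem analyticOnNhd_fredholm_transform_general (b f : ℝ → ℝ) (M m : ℝ) (n : ℕ)
    (hb : ContinuousOn b (Ici 0))
    (hm : 0 < m) (hgrowth : ∀ s ≥ (0 : ℝ), b s ≤ M + m * s)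
    (hfint : IntegrableOn f (Ici 0)) :
    AnalyticOnNhd ℝ
      (fun c : ℝ => ∫ s in Ioi (0 : ℝ),
        Real.exp (-c ^ 2 * s / 2 + c * b s) * s ^ n * f s)
      (Ioi (2 * m + 2)) := by
  have hf : IntegrableOn f (Ioi 0) := hfint.mono_set Ioi_subset_Ici_self
  have hanalytic : AnalyticOnNhd ℂ (fun c ↦ ∫ s in Ioi 0, fredholmIntegrand b f n c s)
      (fredholmDomain m) :=
    analyticOnNhd_integral_of_locally_dominated (isOpen_fredholmDomain m)
      (aestronglyMeasurable_fredholmIntegrand (hb.mono Ioi_subset_Ici_self) hf.1)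
      (.of_forall differentiable_fredholmIntegrand)
      fun c hc ↦ fredholmIntegrand_locally_dominated hgrowth hf hc
  have hreal : MapsTo (↑) (Ioi (2 * m + 2)) (fredholmDomain m) := fun c (hc : 2 * m + 2 < c) ↦
    ofReal_mem_fredholmDomain hm.le (by linarith)
  convert hanalytic.re_comp_ofReal hreal using 2 with c
  simp only [fredholmIntegrand_ofReal]
  rw [integral_complex_ofReal, Complex.ofReal_re]

/-- The Fredholm transform `c ↦ I^f(n)(c) = ∫₀^∞ e^{-c²s/2 + c b(s)} sⁿ f(s) ds`
is real-analytic on `(2m + 2, ∞)`. -/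
theorem analyticOnNhd_fredholm_transform (b f : ℝ → ℝ) (M m : ℝ) (n : ℕ)
    (hb : ContinuousOn b (Ici 0))
    (hM : 0 < M) (hm : 0 < m) (hgrowth : ∀ s ≥ (0 : ℝ), b s ≤ M + m * s)
    (hfc : ContinuousOn f (Ici 0)) (hfint : IntegrableOn f (Ici 0)) :
    AnalyticOnNhd ℝ
      (fun c : ℝ => ∫ s in Ioi (0 : ℝ),
        Real.exp (-c ^ 2 * s / 2 + c * b s) * s ^ n * f s)
      (Ioi (2 * m + 2)) :=
  analyticOnNhd_fredholm_transform_general b f M m n hb hm hgrowth hfint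
end

section
/- Fix b₀ > 0. If f : (0,∞) → ℝ is continuous, strictly positive and integrable and satisfies 1 = ∫₀^∞ e^{-c²s/2 + c·b₀} f(s) ds for all c > 0, then f(s) = (b₀/√(2π s³)) · e^{-b₀²/(2s)} for all s > 0. -/
/-!
Subtracting the Lévy density `b₀ / √(2πs³) e^{-b₀²/(2s)}`, which solves the same equation (the
substitution `s = b₀² / t²` reduces its integral to the Cauchy–Schlömilch integral
`∫₀^∞ e^{-(t - a/t)²/2} dt = √(2π) / 2`), leaves a continuous `g` whose Laplace transform
vanishes on `(0, ∞)`. In the variable `u = e^{-s}` this says that all moments of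
`e^{-s} g(s)` vanish, so by the Weierstrass approximation theorem `∫ φ(e^{-s}) e^{-s} g(s) ds = 0`
for every continuous `φ`; a tent function `φ` centred at `e^{-s₀}` then forces `g(s₀) = 0`.
-/

open MeasureTheory Real Filter Set

section CauchySchlomilch

variable {a : ℝ}

theorem strictMonoOn_sub_div (ha : 0 ≤ a) : StrictMonoOn (fun t : ℝ => t - a / t) (Ioi 0) :=
  fun _ hx _ _ hxy =>
    add_lt_add_of_lt_of_le hxy (neg_le_neg (div_le_div_of_nonneg_left ha hx hxy.le))

theorem image_sub_div_Ioi (ha : 0 < a) : (fun t : ℝ => t - a / t) '' Ioi 0 = univ := by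
  refine eq_univ_of_forall fun u => ?_
  -- the positive root of `t ^ 2 - u * t - a = 0`
  set r := √(u ^ 2 + 4 * a)
  have hr : r ^ 2 = u ^ 2 + 4 * a := sq_sqrt (by positivity)
  have hur : |u| < r := by
    rw [← sqrt_sq_eq_abs]
    exact sqrt_lt_sqrt (sq_nonneg u) (by linarith)
  have ht : 0 < (u + r) / 2 := by linarith [neg_abs_le u]
  refine ⟨(u + r) / 2, ht, ?_⟩
  have hne : u + r ≠ 0 := by linarith
  field_simp
  nlinarith

theorem integrableOn_and_integral_one_add_div_sq_mul_comp_sub_div (ha : 0 < a) {F : ℝ → ℝ}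
    (hF : Integrable F) :
    IntegrableOn (fun t => (1 + a / t ^ 2) * F (t - a / t)) (Ioi 0) ∧
      ∫ t in Ioi 0, (1 + a / t ^ 2) * F (t - a / t) = ∫ u, F u := by
  have hder : ∀ t ∈ Ioi (0 : ℝ),
      HasDerivWithinAt (fun t => t - a / t) (1 + a / t ^ 2) (Ioi 0) t := by
    intro t ht
    refine ((hasDerivAt_id' t).sub ((hasDerivAt_const t a).div (hasDerivAt_id' t)
      (ne_of_gt ht))).hasDerivWithinAt.congr_deriv ?_
    simp only [zero_mul, mul_one, zero_sub, neg_div, sub_neg_eq_add]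
  have hinj := (strictMonoOn_sub_div ha.le).injOn
  have habs : ∀ t ∈ Ioi (0 : ℝ),
      |1 + a / t ^ 2| • F (t - a / t) = (1 + a / t ^ 2) * F (t - a / t) := by
    intro t ht
    rw [smul_eq_mul, abs_of_pos (by have := ht.out; positivity)]
  constructor
  · refine IntegrableOn.congr_fun ?_ habs measurableSet_Ioi
    refine (integrableOn_image_iff_integrableOn_abs_deriv_smul measurableSet_Ioi hder hinj F).1 ?_
    rw [image_sub_div_Ioi ha]
    exact hF.integrableOn
  · have := integral_image_eq_integral_abs_deriv_smul measurableSet_Ioi hder hinj F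
    rw [image_sub_div_Ioi ha, setIntegral_univ] at this
    rw [this]
    exact (setIntegral_congr_fun measurableSet_Ioi habs).symm

theorem strictAntiOn_div (ha : 0 < a) : StrictAntiOn (fun t : ℝ => a / t) (Ioi 0) :=
  fun _ hx _ _ hxy => div_lt_div_of_pos_left ha hx hxy

theorem image_div_Ioi (ha : 0 < a) : (fun t : ℝ => a / t) '' Ioi 0 = Ioi 0 := by
  refine Subset.antisymm (image_subset_iff.2 fun t ht => div_pos ha ht) fun u hu => ?_
  exact ⟨a / u, div_pos ha hu, div_div_cancel₀ ha.ne'⟩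

theorem integral_comp_div_Ioi (ha : 0 < a) (H : ℝ → ℝ) :
    ∫ t in Ioi 0, H t = ∫ t in Ioi 0, a / t ^ 2 * H (a / t) := by
  have hder : ∀ t ∈ Ioi (0 : ℝ), HasDerivWithinAt (fun t => a / t) (-(a / t ^ 2)) (Ioi 0) t := by
    intro t ht
    refine ((hasDerivAt_const t a).div (hasDerivAt_id' t)
      (ne_of_gt ht)).hasDerivWithinAt.congr_deriv ?_
    simp only [zero_mul, mul_one, zero_sub, neg_div]
  rw [← image_div_Ioi ha, integral_image_eq_integral_abs_deriv_smul measurableSet_Ioi hder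
    (strictAntiOn_div ha).injOn, image_div_Ioi ha]
  refine setIntegral_congr_fun measurableSet_Ioi fun t ht => ?_
  rw [smul_eq_mul, abs_neg, abs_of_pos (by have := ht.out; positivity)]

theorem integrableOn_and_integral_comp_sub_div_Ioi (ha : 0 < a) {F : ℝ → ℝ} (hF : Integrable F)
    (heven : ∀ u, F (-u) = F u) :
    IntegrableOn (fun t => F (t - a / t)) (Ioi 0) ∧
      ∫ t in Ioi 0, F (t - a / t) = (∫ u, F u) / 2 := by
  obtain ⟨hJi, hJ⟩ := integrableOn_and_integral_one_add_div_sq_mul_comp_sub_div ha hF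
  have hi : IntegrableOn (fun t => F (t - a / t)) (Ioi 0) := by
    have hbdd : ∀ᵐ t ∂volume.restrict (Ioi (0 : ℝ)), ‖(1 + a / t ^ 2)⁻¹‖ ≤ 1 := by
      refine (ae_restrict_iff' measurableSet_Ioi).2 (ae_of_all _ fun t ht => ?_)
      have : 0 ≤ a / t ^ 2 := by have := ht.out; positivity
      rw [norm_inv, Real.norm_of_nonneg (by linarith)]
      exact inv_le_one_of_one_le₀ (by linarith)
    refine IntegrableOn.congr_fun
      (hJi.bdd_mul (Measurable.aestronglyMeasurable (by fun_prop)) hbdd)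
      (fun t ht => ?_) measurableSet_Ioi
    have : 0 < 1 + a / t ^ 2 := by have := ht.out; positivity
    simp only [← mul_assoc, inv_mul_cancel₀ this.ne', one_mul]
  have hi' : IntegrableOn (fun t => a / t ^ 2 * F (t - a / t)) (Ioi 0) :=
    (hJi.sub hi).congr_fun (fun t _ => by simp only [Pi.sub_apply]; ring) measurableSet_Ioi
  -- `t ↦ a / t` maps `t - a / t` to its negative
  have hsym : ∫ t in Ioi 0, F (t - a / t) = ∫ t in Ioi 0, a / t ^ 2 * F (t - a / t) := by
    rw [integral_comp_div_Ioi ha]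
    refine setIntegral_congr_fun measurableSet_Ioi fun t _ => ?_
    rw [← heven, div_div_cancel₀ ha.ne', neg_sub]
  refine ⟨hi, ?_⟩
  have hsplit : ∫ t in Ioi 0, (1 + a / t ^ 2) * F (t - a / t) =
      (∫ t in Ioi 0, F (t - a / t)) + ∫ t in Ioi 0, a / t ^ 2 * F (t - a / t) := by
    rw [← integral_add hi hi']
    simp only [add_mul, one_mul]
  linarith

end CauchySchlomilch

section Levy

theorem exp_neg_sq_div_two_eq (u : ℝ) : exp (-u ^ 2 / 2) = exp (-(1 / 2) * u ^ 2) := by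
  ring_nf

theorem integrable_exp_neg_sq_div_two : Integrable fun u : ℝ => exp (-u ^ 2 / 2) := by
  simpa only [exp_neg_sq_div_two_eq] using integrable_exp_neg_mul_sq one_half_pos

theorem integral_exp_neg_sq_div_two : ∫ u, exp (-u ^ 2 / 2) = √(2 * π) := by
  simp only [exp_neg_sq_div_two_eq]
  rw [integral_gaussian, div_div_eq_mul_div, div_one, mul_comm]

theorem strictAntiOn_div_sq {a : ℝ} (ha : 0 < a) : StrictAntiOn (fun t : ℝ => a / t ^ 2) (Ioi 0) :=
  fun _ hx _ _ hxy =>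
    div_lt_div_of_pos_left ha (pow_pos hx 2) (pow_lt_pow_left₀ hxy (le_of_lt hx) two_ne_zero)

theorem image_div_sq_Ioi {a : ℝ} (ha : 0 < a) : (fun t : ℝ => a / t ^ 2) '' Ioi 0 = Ioi 0 := by
  refine Subset.antisymm (image_subset_iff.2 fun t ht => div_pos ha (pow_pos ht 2)) fun u hu => ?_
  have hu : 0 < u := hu
  refine ⟨√(a / u), sqrt_pos.2 (div_pos ha hu), ?_⟩
  simp only [sq_sqrt (div_pos ha hu).le, div_div_cancel₀ ha.ne']

/-- The density of the first time standard Brownian motion reaches the level `b`. -/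
noncomputable def levyDensity (b s : ℝ) : ℝ :=
  b / √(2 * π * s ^ 3) * exp (-b ^ 2 / (2 * s))

theorem continuousOn_levyDensity (b : ℝ) : ContinuousOn (levyDensity b) (Ioi 0) := by
  intro s hs
  have hs : 0 < s := hs
  have : 0 < 2 * π * s ^ 3 := by positivity
  exact ContinuousAt.continuousWithinAt (by unfold levyDensity; fun_prop (disch := positivity))

theorem mul_exp_mul_levyDensity_div_sq {b : ℝ} (c : ℝ) (hb : 0 < b) {t : ℝ} (ht : 0 < t) :
    2 * b ^ 2 / t ^ 3 * (exp (-c ^ 2 * (b ^ 2 / t ^ 2) / 2 + c * b) * levyDensity b (b ^ 2 / t ^ 2))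
      = 2 / √(2 * π) * exp (-(t - c * b / t) ^ 2 / 2) := by
  have hsqrt : √(2 * π * (b ^ 2 / t ^ 2) ^ 3) = √(2 * π) * (b ^ 3 / t ^ 3) := by
    rw [show 2 * π * (b ^ 2 / t ^ 2) ^ 3 = 2 * π * (b ^ 3 / t ^ 3) ^ 2 by ring,
      sqrt_mul (by positivity), sqrt_sq (by positivity)]
  have hexp : exp (-c ^ 2 * (b ^ 2 / t ^ 2) / 2 + c * b) * exp (-b ^ 2 / (2 * (b ^ 2 / t ^ 2)))
      = exp (-(t - c * b / t) ^ 2 / 2) := by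
    rw [← exp_add]
    congr 1
    field_simp
    ring
  have hsqrt_pos : 0 < √(2 * π) := sqrt_pos.2 (by positivity)
  rw [levyDensity, hsqrt, ← hexp]
  field_simp

theorem integrableOn_and_integral_exp_mul_levyDensity {b c : ℝ} (hb : 0 < b) (hc : 0 < c) :
    IntegrableOn (fun s => exp (-c ^ 2 * s / 2 + c * b) * levyDensity b s) (Ioi 0) ∧
      ∫ s in Ioi 0, exp (-c ^ 2 * s / 2 + c * b) * levyDensity b s = 1 := by
  set G : ℝ → ℝ := fun s => exp (-c ^ 2 * s / 2 + c * b) * levyDensity b s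
  have hb2 : 0 < b ^ 2 := by positivity
  have hder : ∀ t ∈ Ioi (0 : ℝ),
      HasDerivWithinAt (fun t => b ^ 2 / t ^ 2) (-(2 * b ^ 2 / t ^ 3)) (Ioi 0) t := by
    intro t ht
    have ht : 0 < t := ht
    refine ((hasDerivAt_const t (b ^ 2)).div (hasDerivAt_pow 2 t)
      (by positivity)).hasDerivWithinAt.congr_deriv ?_
    field_simp
    ring
  have hinj := (strictAntiOn_div_sq hb2).injOn
  -- the substitution `s = b ^ 2 / t ^ 2` turns the integrand into a Cauchy–Schlömilch integrand
  have hsubst : ∀ t ∈ Ioi (0 : ℝ), |-(2 * b ^ 2 / t ^ 3)| • G (b ^ 2 / t ^ 2)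
      = 2 / √(2 * π) * exp (-(t - c * b / t) ^ 2 / 2) := by
    intro t ht
    have ht : 0 < t := ht
    rw [abs_neg, abs_of_pos (by positivity), smul_eq_mul]
    exact mul_exp_mul_levyDensity_div_sq c hb ht
  obtain ⟨hCSi, hCS⟩ := integrableOn_and_integral_comp_sub_div_Ioi (mul_pos hc hb)
    integrable_exp_neg_sq_div_two (fun u => by rw [neg_sq])
  constructor
  · rw [← image_div_sq_Ioi hb2,
      integrableOn_image_iff_integrableOn_abs_deriv_smul measurableSet_Ioi hder hinj]
    exact IntegrableOn.congr_fun (hCSi.const_mul _) (fun t ht => (hsubst t ht).symm)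
      measurableSet_Ioi
  · rw [← image_div_sq_Ioi hb2,
      integral_image_eq_integral_abs_deriv_smul measurableSet_Ioi hder hinj,
      setIntegral_congr_fun measurableSet_Ioi hsubst, integral_const_mul, hCS,
      integral_exp_neg_sq_div_two]
    have : 0 < √(2 * π) := sqrt_pos.2 (by positivity)
    field_simp

end Levy

section Moments

variable {α : Type*} [MeasurableSpace α] {μ : Measure α} {θ w : α → ℝ}

theorem integrable_eval_mul_and_integral_eq_zero_of_moments_eq_zero
    (hθ : AEStronglyMeasurable θ μ) (hθ01 : ∀ᵐ x ∂μ, θ x ∈ Icc (0 : ℝ) 1) (hw : Integrable w μ)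
    (hmom : ∀ n : ℕ, ∫ x, θ x ^ n * w x ∂μ = 0) (p : Polynomial ℝ) :
    Integrable (fun x => p.eval (θ x) * w x) μ ∧ ∫ x, p.eval (θ x) * w x ∂μ = 0 := by
  induction p using Polynomial.induction_on' with
  | add p q hp hq =>
    simp only [Polynomial.eval_add, add_mul]
    exact ⟨hp.1.add hq.1, by rw [integral_add hp.1 hq.1, hp.2, hq.2, add_zero]⟩
  | monomial n a =>
    have hpow : Integrable (fun x => θ x ^ n * w x) μ := by
      refine hw.bdd_mul (hθ.pow n) (c := 1) ?_
      filter_upwards [hθ01] with x hx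
      rw [norm_pow, Real.norm_of_nonneg hx.1]
      exact pow_le_one₀ hx.1 hx.2
    simp only [Polynomial.eval_monomial, mul_assoc]
    exact ⟨hpow.const_mul a, by rw [integral_const_mul, hmom n, mul_zero]⟩

theorem integral_comp_mul_eq_zero_of_moments_eq_zero
    (hθ : AEStronglyMeasurable θ μ) (hθ01 : ∀ᵐ x ∂μ, θ x ∈ Icc (0 : ℝ) 1) (hw : Integrable w μ)
    (hmom : ∀ n : ℕ, ∫ x, θ x ^ n * w x ∂μ = 0) {φ : ℝ → ℝ} (hφ : Continuous φ) :
    ∫ x, φ (θ x) * w x ∂μ = 0 := by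
  set M := ∫ x, ‖w x‖ ∂μ
  have hM : 0 ≤ M := integral_nonneg fun x => norm_nonneg _
  -- Weierstrass: replacing `φ` by a polynomial `ε`-close to it on `[0, 1]` costs at most `ε * M`.
  have hsmall : ∀ ε > 0, |∫ x, φ (θ x) * w x ∂μ| ≤ ε * M := by
    intro ε hε
    obtain ⟨p, hp⟩ := exists_polynomial_near_of_continuousOn 0 1 φ hφ.continuousOn ε hε
    obtain ⟨hpi, hp0⟩ :=
      integrable_eval_mul_and_integral_eq_zero_of_moments_eq_zero hθ hθ01 hw hmom p
    have hclose : ∀ᵐ x ∂μ, ‖(φ (θ x) - p.eval (θ x)) * w x‖ ≤ ε * ‖w x‖ := by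
      filter_upwards [hθ01] with x hx
      rw [norm_mul, Real.norm_eq_abs, abs_sub_comm]
      exact mul_le_mul_of_nonneg_right (hp _ hx).le (norm_nonneg _)
    have hdi : Integrable (fun x => (φ (θ x) - p.eval (θ x)) * w x) μ :=
      (hw.norm.const_mul ε).mono'
        (((hφ.comp_aestronglyMeasurable hθ).sub
          ((Polynomial.continuous p).comp_aestronglyMeasurable hθ)).mul hw.1) hclose
    calc |∫ x, φ (θ x) * w x ∂μ|
        = ‖∫ x, (φ (θ x) - p.eval (θ x)) * w x ∂μ‖ := by
          rw [Real.norm_eq_abs, ← add_zero (∫ x, (φ (θ x) - p.eval (θ x)) * w x ∂μ), ← hp0,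
            ← integral_add hdi hpi]
          simp only [sub_mul, sub_add_cancel]
      _ ≤ ∫ x, ε * ‖w x‖ ∂μ := norm_integral_le_of_norm_le (hw.norm.const_mul ε) hclose
      _ = ε * M := integral_const_mul ε _
  refine abs_nonpos_iff.mp (le_of_forall_pos_le_add fun ε hε => ?_)
  calc |∫ x, φ (θ x) * w x ∂μ| ≤ ε / (M + 1) * M := hsmall _ (by positivity)
    _ ≤ 0 + ε := by
      rw [zero_add, div_mul_eq_mul_div, div_le_iff₀ (by positivity)]
      nlinarith

end Moments

section LaplaceUniqueness

variable {w : ℝ → ℝ}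

theorem not_pos_of_integral_comp_exp_neg_mul_eq_zero (hw : ContinuousOn w (Ioi 0))
    (hwi : IntegrableOn w (Ioi 0))
    (h : ∀ φ : ℝ → ℝ, Continuous φ → ∫ s in Ioi 0, φ (exp (-s)) * w s = 0)
    {s₀ : ℝ} (hs₀ : 0 < s₀) : ¬ 0 < w s₀ := by
  intro hpos
  set u₀ := exp (-s₀)
  have hcont : ContinuousAt (fun u => w (-log u)) u₀ :=
    ContinuousAt.comp_of_eq (hw.continuousAt (Ioi_mem_nhds hs₀))
      (continuousAt_log (exp_pos _).ne').neg (by simp [u₀])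
  obtain ⟨δ, hδ, hwδ⟩ : ∃ δ > 0, ∀ u, dist u u₀ < δ → 0 < w (-log u) :=
    Metric.eventually_nhds_iff.1 (hcont.eventually (lt_mem_nhds (by simpa [u₀] using hpos)))
  -- a tent around `u₀`, supported where `w (-log u) > 0`
  set φ : ℝ → ℝ := fun u => max 0 (δ - dist u u₀)
  have hφ : Continuous φ :=
    continuous_const.max (continuous_const.sub (continuous_id.dist continuous_const))
  have hφθ : Continuous fun s => φ (exp (-s)) := hφ.comp (continuous_exp.comp continuous_neg)
  set F : ℝ → ℝ := fun s => φ (exp (-s)) * w s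
  have hF_nonneg : ∀ s, 0 ≤ F s := by
    intro s
    rcases lt_or_ge (dist (exp (-s)) u₀) δ with hs | hs
    · have := hwδ _ hs
      rw [log_exp, neg_neg] at this
      exact mul_nonneg (le_max_left _ _) this.le
    · simp [F, φ, max_eq_left (sub_nonpos.2 hs)]
  have hFi : IntegrableOn F (Ioi 0) := by
    refine hwi.bdd_mul (c := δ) hφθ.aestronglyMeasurable ?_
    refine ae_of_all _ fun s => ?_
    rw [Real.norm_of_nonneg (le_max_left _ _)]
    exact max_le hδ.le (sub_le_self _ dist_nonneg)
  have hF_pos : 0 < ∫ s in Ioi 0, F s := by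
    rw [setIntegral_pos_iff_support_of_nonneg_ae (ae_of_all _ hF_nonneg) hFi]
    refine Measure.measure_pos_of_mem_nhds _ (x := s₀) (inter_mem ?_ (Ioi_mem_nhds hs₀))
    have hFc : ContinuousAt F s₀ := hφθ.continuousAt.mul (hw.continuousAt (Ioi_mem_nhds hs₀))
    have : F s₀ ≠ 0 := by simp [F, φ, u₀, hδ, hpos.ne']
    exact hFc.eventually_ne this
  exact hF_pos.ne' (h φ hφ)

theorem eqOn_zero_of_integral_comp_exp_neg_mul_eq_zero (hw : ContinuousOn w (Ioi 0))
    (hwi : IntegrableOn w (Ioi 0))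
    (h : ∀ φ : ℝ → ℝ, Continuous φ → ∫ s in Ioi 0, φ (exp (-s)) * w s = 0) :
    EqOn w 0 (Ioi 0) := by
  have hneg : ∀ φ : ℝ → ℝ, Continuous φ → ∫ s in Ioi 0, φ (exp (-s)) * -w s = 0 := by
    intro φ hφ
    simp only [mul_neg, integral_neg, h φ hφ, neg_zero]
  intro s hs
  exact le_antisymm (not_lt.1 (not_pos_of_integral_comp_exp_neg_mul_eq_zero hw hwi h hs))
    (neg_nonpos.1 (not_lt.1 (not_pos_of_integral_comp_exp_neg_mul_eq_zero hw.neg hwi.neg hneg hs)))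

theorem eqOn_zero_of_laplace_eq_zero {g : ℝ → ℝ} (hg : ContinuousOn g (Ioi 0))
    (hL : ∀ l > 0, IntegrableOn (fun s => exp (-(l * s)) * g s) (Ioi 0) ∧
      ∫ s in Ioi 0, exp (-(l * s)) * g s = 0) :
    EqOn g 0 (Ioi 0) := by
  have hpow : ∀ (n : ℕ) (s : ℝ), exp (-s) ^ n * (exp (-s) * g s) = exp (-((n + 1) * s)) * g s := by
    intro n s
    rw [← mul_assoc, ← exp_nat_mul, ← exp_add]
    ring_nf
  have hwi : IntegrableOn (fun s => exp (-s) * g s) (Ioi 0) := by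
    simpa using (hL 1 one_pos).1
  have hmom : ∀ n : ℕ, ∫ s in Ioi 0, exp (-s) ^ n * (exp (-s) * g s) = 0 := by
    intro n
    simp only [hpow]
    exact (hL _ n.cast_add_one_pos).2
  have hθ01 : ∀ᵐ s ∂volume.restrict (Ioi (0 : ℝ)), exp (-s) ∈ Icc (0 : ℝ) 1 :=
    (ae_restrict_iff' measurableSet_Ioi).2 (ae_of_all _ fun s hs =>
      ⟨(exp_pos _).le, exp_le_one_iff.2 (neg_nonpos.2 (le_of_lt hs))⟩)
  have hw0 := eqOn_zero_of_integral_comp_exp_neg_mul_eq_zero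
    ((continuous_exp.comp continuous_neg).continuousOn.mul hg) hwi fun φ hφ =>
      integral_comp_mul_eq_zero_of_moments_eq_zero
        (continuous_exp.comp continuous_neg).aestronglyMeasurable hθ01 hwi hmom hφ
  intro s hs
  simpa [(exp_pos _).ne'] using hw0 hs

end LaplaceUniqueness

theorem constant_boundary_density_unique_general (b₀ : ℝ) (hb : 0 < b₀) (f : ℝ → ℝ)
    (hfc : ContinuousOn f (Ioi 0))
    (heq : ∀ c > (0 : ℝ),
      IntegrableOn (fun s => Real.exp (-c ^ 2 * s / 2 + c * b₀) * f s) (Ioi 0) ∧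
      (∫ s in Ioi (0 : ℝ), Real.exp (-c ^ 2 * s / 2 + c * b₀) * f s) = 1) :
    ∀ s > (0 : ℝ),
      f s = (b₀ / Real.sqrt (2 * Real.pi * s ^ 3)) * Real.exp (-b₀ ^ 2 / (2 * s)) := by
  have hL : ∀ l > 0, IntegrableOn (fun s => exp (-(l * s)) * (f s - levyDensity b₀ s)) (Ioi 0) ∧
      ∫ s in Ioi 0, exp (-(l * s)) * (f s - levyDensity b₀ s) = 0 := by
    intro l hl
    obtain ⟨c, hc, rfl⟩ : ∃ c > 0, l = c ^ 2 / 2 :=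
      ⟨√(2 * l), sqrt_pos.2 (by linarith), by rw [sq_sqrt (by linarith)]; ring⟩
    obtain ⟨hfi, hf⟩ := heq c hc
    obtain ⟨hLi, hLe⟩ := integrableOn_and_integral_exp_mul_levyDensity hb hc
    have hexp : (fun s => exp (-(c ^ 2 / 2 * s)) * (f s - levyDensity b₀ s)) = fun s =>
        exp (-(c * b₀)) * (exp (-c ^ 2 * s / 2 + c * b₀) * f s
          - exp (-c ^ 2 * s / 2 + c * b₀) * levyDensity b₀ s) := by
      ext s
      rw [← mul_sub, ← mul_assoc, ← exp_add]
      ring_nf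
    rw [hexp]
    refine ⟨(hfi.sub hLi).const_mul _, ?_⟩
    rw [integral_const_mul, integral_sub hfi hLi, hf, hLe, sub_self, mul_zero]
  intro s hs
  exact sub_eq_zero.1 (eqOn_zero_of_laplace_eq_zero (hfc.sub (continuousOn_levyDensity b₀)) hL hs)

/-- Uniqueness for the constant boundary `b(t) ≡ b₀`: any continuous, strictly positive,
integrable solution of `1 = ∫₀^∞ e^{-c²s/2 + c b₀} f(s) ds` (for all `c > 0`) is the
inverse Gaussian density `f(s) = (b₀/√(2πs³)) e^{-b₀²/(2s)}`. -/
theorem constant_boundary_density_unique (b₀ : ℝ) (hb : 0 < b₀) (f : ℝ → ℝ)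
    (hfc : ContinuousOn f (Ioi 0)) (hfpos : ∀ s > (0 : ℝ), 0 < f s)
    (hfint : IntegrableOn f (Ioi 0))
    (heq : ∀ c > (0 : ℝ),
      IntegrableOn (fun s => Real.exp (-c ^ 2 * s / 2 + c * b₀) * f s) (Ioi 0) ∧
      (∫ s in Ioi (0 : ℝ), Real.exp (-c ^ 2 * s / 2 + c * b₀) * f s) = 1) :
    ∀ s > (0 : ℝ),
      f s = (b₀ / Real.sqrt (2 * Real.pi * s ^ 3)) * Real.exp (-b₀ ^ 2 / (2 * s)) :=
  constant_boundary_density_unique_general b₀ hb f hfc heq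
end
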